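/- arXiv:1907.03158 — 2 statements merged into one kernel-verified Lean document; each statement's English description precedes it below -/
import Mathlib

section
/- The graph H obtained from two disjoint paths on three vertices a₀a₁a₂ and b₀b₁b₂ by adding the edge a₁b₁ (i.e., two stars K_{1,3} sharing centres joined by an edge; equivalently, the 'H-graph': two adjacent vertices each with two pendant leaves) is not isomorphic to the γ-graph of any tree. -/
/-!
Call `(u, v)` a swap of a γ-set `D` if `u ∈ D`, `v ∉ D`, `uv` is an edge and `D - u + v` still
dominates; these are exactly the γ-graph edges at `D`. As a forest has no triangle, a swap `u → v`
forces every `D`-private neighbour of `u` into `{u, v}`.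

Let `P` and `Q = P - c + c'` be the γ-sets at the two centres of `H`. Then `P` has exactly three
swaps, two of which lead to leaves. If `P - u + v` is a leaf and `u' → v'` is another swap of `P`,
then `u' → v'` can no longer be performed in `P - u + v`, and a vertex it leaves undominated is a
common neighbour of `u` and `u'` dominated by no other vertex of `P`. Comparing these common
neighbours for the three pairs of swaps yields a 4- or 6-cycle or a fourth swap, unless all three
swaps remove `c`; then `c` is its own unique `P`-private neighbour. Symmetrically `c'` is its own
unique `Q`-private neighbour, yet `c` is a `Q`-private neighbour of `c'`.
-/

open SimpleGraph Finset

/-- The closed neighbourhood of a vertex. -/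
def closedNbhd {V : Type} (G : SimpleGraph V) (x : V) : Set V :=
  {y | y = x ∨ G.Adj x y}

/-- `D` is a dominating set of `G`. -/
def isDomSet {V : Type} [Fintype V] [DecidableEq V] (G : SimpleGraph V) (D : Finset V) : Prop :=
  ∀ v : V, ∃ d ∈ D, v ∈ closedNbhd G d

/-- `D` is a minimum dominating set (γ-set) of `G`. -/
def isMinDomSet {V : Type} [Fintype V] [DecidableEq V] (G : SimpleGraph V) (D : Finset V) : Prop :=
  isDomSet G D ∧ ∀ D' : Finset V, isDomSet G D' → D.card ≤ D'.card

/-- The set of `D`-private neighbours of `x`: vertices in `N[x]` not in the closed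
neighbourhood of any other vertex of `D`. -/
def privN {V : Type} [Fintype V] [DecidableEq V] (G : SimpleGraph V) (D : Finset V) (x : V) :
    Set V :=
  {y | y ∈ closedNbhd G x ∧ ∀ z ∈ D, z ≠ x → y ∉ closedNbhd G z}

/-- The γ-graph of `G`: vertices are the γ-sets of `G`, two γ-sets adjacent iff they differ
by a swap of two adjacent vertices. -/
def gammaGraph {V : Type} [Fintype V] [DecidableEq V] (G : SimpleGraph V) :
    SimpleGraph {D : Finset V // isMinDomSet G D} where
  Adj D₁ D₂ := D₁ ≠ D₂ ∧ ∃ u v : V, G.Adj u v ∧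
    (D₂.1 = (D₁.1 \ {u}) ∪ {v} ∨ D₁.1 = (D₂.1 \ {u}) ∪ {v})
  symm := by
    constructor
    rintro D₁ D₂ ⟨hne, u, v, huv, h | h⟩
    · exact ⟨hne.symm, u, v, huv, Or.inr h⟩
    · exact ⟨hne.symm, u, v, huv, Or.inl h⟩
  loopless := by constructor; rintro D ⟨hne, -⟩; exact hne rfl

/-- The graph `H`: two adjacent vertices (1 and 4), each with two pendant leaves. -/
def Hgraph : SimpleGraph (Fin 6) :=
  SimpleGraph.fromEdgeSet {s(0, 1), s(1, 2), s(3, 4), s(4, 5), s(1, 4)}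

theorem Set.subset_singleton_of_subset_pair {α : Type*} {s : Set α} {a b c : α}
    (hb : s ⊆ {a, b}) (hc : s ⊆ {a, c}) (hbc : b ≠ c) : s ⊆ {a} := by
  intro x hx
  rcases hb hx with rfl | rfl
  · rfl
  · rcases hc hx with rfl | rfl
    · rfl
    · exact absurd rfl hbc

namespace Finset
variable {α : Type*} [DecidableEq α] {s : Finset α} {a a' b b' : α}

theorem sdiff_singleton_union_singleton : s \ {a} ∪ {b} = insert b (s.erase a) := by
  rw [sdiff_singleton_eq_erase, union_comm, insert_eq]

theorem card_sdiff_singleton_union_singleton (ha : a ∈ s) (hb : b ∉ s) :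
    (s \ {a} ∪ {b}).card = s.card := by
  rw [sdiff_singleton_union_singleton, card_insert_of_notMem (fun h => hb (mem_of_mem_erase h)),
    card_erase_add_one ha]

theorem mem_and_notMem_of_card_sdiff_singleton_union_singleton
    (hcard : (s \ {a} ∪ {b}).card = s.card) (hne : s \ {a} ∪ {b} ≠ s) : a ∈ s ∧ b ∉ s := by
  rw [sdiff_singleton_union_singleton] at hcard hne
  have ha : a ∈ s := by
    by_contra ha
    rw [erase_eq_of_notMem ha] at hcard hne
    refine hne (insert_eq_of_mem (by_contra fun hb => ?_))
    rw [card_insert_of_notMem hb] at hcard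
    omega
  refine ⟨ha, fun hb => hne ?_⟩
  by_cases hba : b = a
  · rw [hba, insert_erase ha]
  · rw [insert_eq_of_mem (mem_erase.2 ⟨hba, hb⟩)] at hcard
    exact absurd hcard (card_erase_lt_of_mem ha).ne

theorem sdiff_singleton_union_singleton_swap (ha : a ∈ s) (hb : b ∉ s) :
    (s \ {a} ∪ {b}) \ {b} ∪ {a} = s := by
  rw [sdiff_singleton_union_singleton, sdiff_singleton_union_singleton,
    erase_insert (fun h => hb (mem_of_mem_erase h)), insert_erase ha]

theorem sdiff_singleton_union_singleton_inj (ha' : a' ∈ s) (hb' : b' ∉ s)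
    (h : s \ {a} ∪ {b} = s \ {a'} ∪ {b'}) : a = a' ∧ b = b' := by
  simp only [sdiff_singleton_union_singleton, Finset.ext_iff, mem_insert, mem_erase] at h
  constructor <;> grind

end Finset

namespace SimpleGraph.IsAcyclic
variable {V : Type} {G : SimpleGraph V}

theorem mem_edges_of_adj (hG : G.IsAcyclic) {v w : V} (h : G.Adj v w) (p : G.Walk v w) :
    s(v, w) ∈ p.edges :=
  isBridge_iff_forall_walk_mem_edges.1 (isAcyclic_iff_forall_adj_isBridge.1 hG h) p

theorem not_adj_of_adj_of_adj (hG : G.IsAcyclic) {a b c : V} (hab : G.Adj a b)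
    (hbc : G.Adj b c) : ¬G.Adj a c := fun hac => by
  have := hG.mem_edges_of_adj hac (.cons hab (.cons hbc .nil))
  simp only [Walk.edges_cons, Walk.edges_nil, List.mem_cons, Sym2.eq_iff, List.not_mem_nil] at this
  grind [hab.ne, hbc.ne]

theorem eq_of_adj_of_adj (hG : G.IsAcyclic) {a b c d : V} (hac : a ≠ c)
    (hab : G.Adj a b) (hbc : G.Adj b c) (had : G.Adj a d) (hdc : G.Adj d c) : b = d := by
  by_contra hbd
  have := hG.mem_edges_of_adj hab (.cons had (.cons hdc (.cons hbc.symm .nil)))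
  simp only [Walk.edges_cons, Walk.edges_nil, List.mem_cons, Sym2.eq_iff, List.not_mem_nil] at this
  grind [hab.ne, hbc.ne]

theorem eq_of_mem_closedNbhd (hG : G.IsAcyclic) {a b c y : V} (hac : a ≠ c)
    (hab : G.Adj a b) (hcb : G.Adj c b) (hya : y ∈ closedNbhd G a) (hyc : y ∈ closedNbhd G c) :
    y = b := by
  rcases hya with rfl | hay <;> rcases hyc with rfl | hcy
  · exact absurd rfl hac
  · exact absurd hcy.symm (hG.not_adj_of_adj_of_adj hab hcb.symm)
  · exact absurd hay (hG.not_adj_of_adj_of_adj hab hcb.symm)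
  · exact (hG.eq_of_adj_of_adj hac hab hcb.symm hay hcy.symm).symm

end SimpleGraph.IsAcyclic

section Domination
variable {V : Type} [Fintype V] [DecidableEq V] {G : SimpleGraph V} {D D' : Finset V} {u v : V}

theorem isMinDomSet.card_eq (hD : isMinDomSet G D) (hD' : isMinDomSet G D') :
    D.card = D'.card :=
  le_antisymm (hD.2 _ hD'.1) (hD'.2 _ hD.1)

theorem isMinDomSet.privN_nonempty (hD : isMinDomSet G D) (hu : u ∈ D) :
    (privN G D u).Nonempty := by
  by_contra hempty
  have hdom : isDomSet G (D.erase u) := by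
    intro x
    obtain ⟨d, hd, hx⟩ := hD.1 x
    by_cases hdu : d = u
    · subst hdu
      have hx' : x ∉ privN G D d := fun h => hempty ⟨x, h⟩
      simp only [privN, Set.mem_ofPred_eq, not_and, not_forall, not_not] at hx'
      obtain ⟨z, hz, hzd, hxz⟩ := hx' hx
      exact ⟨z, mem_erase.2 ⟨hzd, hz⟩, hxz⟩
    · exact ⟨d, mem_erase.2 ⟨hdu, hd⟩, hx⟩
  exact (card_erase_lt_of_mem hu).not_ge (hD.2 _ hdom)

theorem isDomSet.swap_of_privN_subset (hD : isDomSet G D) (huv : G.Adj u v)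
    (h : privN G D u ⊆ {u, v}) : isDomSet G (D \ {u} ∪ {v}) := by
  intro x
  obtain ⟨d, hd, hx⟩ := hD x
  by_cases hdu : d = u
  · subst hdu
    by_cases hother : ∃ z ∈ D, z ≠ d ∧ x ∈ closedNbhd G z
    · obtain ⟨z, hz, hzd, hxz⟩ := hother
      exact ⟨z, by simp [hz, hzd], hxz⟩
    · push Not at hother
      refine ⟨v, by simp, ?_⟩
      rcases h ⟨hx, hother⟩ with rfl | rfl
      exacts [Or.inr huv.symm, Or.inl rfl]
  · exact ⟨d, by simp [hd, hdu], hx⟩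

theorem SimpleGraph.IsAcyclic.privN_subset_of_isDomSet_swap (hG : G.IsAcyclic)
    (huv : G.Adj u v) (h : isDomSet G (D \ {u} ∪ {v})) : privN G D u ⊆ {u, v} := by
  rintro y ⟨hyu, hyD⟩
  obtain ⟨d, hd, hyd⟩ := h y
  rcases mem_union.1 hd with hd | hd
  · obtain ⟨hdD, hdu⟩ := mem_sdiff.1 hd
    exact absurd hyd (hyD d hdD (by simpa using hdu))
  · obtain rfl := mem_singleton.1 hd
    rcases hyu with rfl | huy
    · exact Or.inl rfl
    rcases hyd with rfl | hdy
    · exact Or.inr rfl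
    exact absurd huy (hG.not_adj_of_adj_of_adj huv hdy)

end Domination

section Swap
variable {V : Type} [Fintype V] [DecidableEq V] {G : SimpleGraph V} {D : Finset V} {u v : V}

structure IsSwap (G : SimpleGraph V) (D : Finset V) (u v : V) : Prop where
  mem : u ∈ D
  notMem : v ∉ D
  adj : G.Adj u v
  dom : isDomSet G (D \ {u} ∪ {v})

theorem IsSwap.isMinDomSet (hD : isMinDomSet G D) (h : IsSwap G D u v) :
    isMinDomSet G (D \ {u} ∪ {v}) :=
  ⟨h.dom, fun D' hD' => card_sdiff_singleton_union_singleton h.mem h.notMem ▸ hD.2 D' hD'⟩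

theorem IsSwap.symm (hD : isDomSet G D) (h : IsSwap G D u v) :
    IsSwap G (D \ {u} ∪ {v}) v u where
  mem := by simp
  notMem := by simp [h.adj.ne, h.mem]
  adj := h.adj.symm
  dom := by rwa [sdiff_singleton_union_singleton_swap h.mem h.notMem]

theorem IsSwap.privN_subset (hG : G.IsAcyclic) (h : IsSwap G D u v) : privN G D u ⊆ {u, v} :=
  hG.privN_subset_of_isDomSet_swap h.adj h.dom

theorem IsSwap.privN_subset_closedNbhd (hG : G.IsAcyclic) (h : IsSwap G D u v) :
    privN G D u ⊆ closedNbhd G v := by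
  refine (h.privN_subset hG).trans ?_
  rintro y (rfl | rfl)
  exacts [Or.inr h.adj.symm, Or.inl rfl]

theorem gammaGraph_adj_iff {D E : {X : Finset V // isMinDomSet G X}} :
    (gammaGraph G).Adj D E ↔ ∃ u v, IsSwap G D.1 u v ∧ E.1 = D.1 \ {u} ∪ {v} := by
  constructor
  · rintro ⟨hne, u, v, huv, hE | hD⟩
    · obtain ⟨hu, hv⟩ := mem_and_notMem_of_card_sdiff_singleton_union_singleton
        (hE ▸ E.2.card_eq D.2) (hE ▸ fun h => hne (Subtype.ext h).symm)
      exact ⟨u, v, ⟨hu, hv, huv, hE ▸ E.2.1⟩, hE⟩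
    · obtain ⟨hu, hv⟩ := mem_and_notMem_of_card_sdiff_singleton_union_singleton
        (hD ▸ D.2.card_eq E.2) (hD ▸ fun h => hne (Subtype.ext h))
      have hE : E.1 = D.1 \ {v} ∪ {u} := by rw [hD, sdiff_singleton_union_singleton_swap hu hv]
      exact ⟨v, u, ⟨by simp [hD], by simp [hD, huv.ne], huv.symm, hE ▸ E.2.1⟩, hE⟩
  · rintro ⟨u, v, hs, hE⟩
    refine ⟨fun h => hs.notMem ?_, u, v, hs.adj, Or.inl hE⟩
    have hvE : v ∈ E.1 := by simp [hE]
    rwa [← h] at hvE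

theorem IsSwap.false_of_privN_eq_singleton (h : IsSwap G D u v) (hu : privN G D u = {u})
    (hv : privN G (D \ {u} ∪ {v}) v = {v}) : False := by
  have hmem : u ∈ privN G (D \ {u} ∪ {v}) v := by
    refine ⟨Or.inr h.adj.symm, fun z hz hzv => ?_⟩
    obtain ⟨hzD, hzu⟩ := mem_sdiff.1 (by simpa [hzv] using hz : z ∈ D \ {u})
    exact (hu ▸ Set.mem_singleton u).2 z hzD (by simpa using hzu)
  rw [hv, Set.mem_singleton_iff] at hmem
  exact h.adj.ne hmem

end Swap

section SharedPrivN
variable {V : Type} {G : SimpleGraph V} {D : Finset V} {u u' w : V}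

structure IsSharedPrivN (G : SimpleGraph V) (D : Finset V) (u u' w : V) : Prop where
  adj_left : G.Adj u w
  adj_right : G.Adj u' w
  notMem_closedNbhd : ∀ z ∈ D, z ≠ u → z ≠ u' → w ∉ closedNbhd G z

theorem IsSharedPrivN.symm (h : IsSharedPrivN G D u u' w) : IsSharedPrivN G D u' u w :=
  ⟨h.adj_right, h.adj_left, fun z hz hzu' hzu => h.notMem_closedNbhd z hz hzu hzu'⟩

theorem IsSharedPrivN.notMem (h : IsSharedPrivN G D u u' w) : w ∉ D :=
  fun hw => h.notMem_closedNbhd w hw h.adj_left.ne' h.adj_right.ne' (Or.inl rfl)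

theorem SimpleGraph.IsAcyclic.false_of_pairwise_isSharedPrivN (hG : G.IsAcyclic)
    {u₁ u₂ u₃ w₁₂ w₁₃ w₂₃ : V} (hu₁ : u₁ ∈ D) (hu₃ : u₃ ∈ D)
    (h₁₂ : u₁ ≠ u₂) (h₁₃ : u₁ ≠ u₃) (h₂₃ : u₂ ≠ u₃)
    (hw₁₂ : IsSharedPrivN G D u₁ u₂ w₁₂) (hw₁₃ : IsSharedPrivN G D u₁ u₃ w₁₃)
    (hw₂₃ : IsSharedPrivN G D u₂ u₃ w₂₃) : False := by
  have hw₁₂u₃ : w₁₂ ∉ closedNbhd G u₃ := hw₁₂.notMem_closedNbhd u₃ hu₃ h₁₃.symm h₂₃.symm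
  have hw₂₃u₁ : w₂₃ ∉ closedNbhd G u₁ := hw₂₃.notMem_closedNbhd u₁ hu₁ h₁₂ h₁₃
  have : w₁₂ ≠ u₃ := fun h => hw₁₂u₃ (Or.inl h)
  have : w₁₂ ≠ w₁₃ := fun h => hw₁₂u₃ (Or.inr (h ▸ hw₁₃.adj_right))
  have : w₁₂ ≠ w₂₃ := fun h => hw₁₂u₃ (Or.inr (h ▸ hw₂₃.adj_right))
  have : w₂₃ ≠ u₁ := fun h => hw₂₃u₁ (Or.inl h)
  have hcycle := hG.mem_edges_of_adj hw₁₂.adj_left (.cons hw₁₃.adj_left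
    (.cons hw₁₃.adj_right.symm (.cons hw₂₃.adj_right (.cons hw₂₃.adj_left.symm
      (.cons hw₁₂.adj_right .nil)))))
  simp only [Walk.edges_cons, Walk.edges_nil, List.mem_cons, Sym2.eq_iff,
    List.not_mem_nil] at hcycle
  grind [hw₁₂.adj_left.ne]

end SharedPrivN

namespace SimpleGraph.IsAcyclic
variable {V : Type} [Fintype V] [DecidableEq V] {G : SimpleGraph V} {D : Finset V}
  {u u' v v' w w' : V}

theorem isSwap_left_unique (hG : G.IsAcyclic) (hD : isMinDomSet G D) {u₁ u₂ : V}
    (h₁ : IsSwap G D u₁ v) (h₂ : IsSwap G D u₂ v) : u₁ = u₂ := by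
  by_contra hne
  set E := D \ {u₁} ∪ {v}
  have hu₂E : u₂ ∈ E := by simp [E, h₂.mem, Ne.symm hne]
  obtain ⟨y, hyu₂, hyE⟩ := (h₁.isMinDomSet hD).privN_nonempty hu₂E
  have hyv : y ∉ closedNbhd G v := hyE v (by simp) (fun h => h₂.notMem (h ▸ h₂.mem))
  have hyu₁ : y ∈ closedNbhd G u₁ := by
    by_contra hyu₁
    refine hyv (h₂.privN_subset_closedNbhd hG ⟨hyu₂, fun z hz hzu₂ => ?_⟩)
    by_cases hzu₁ : z = u₁
    · exact hzu₁ ▸ hyu₁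
    · exact hyE z (by simp [hz, hzu₁]) hzu₂
  exact hyv (hG.eq_of_mem_closedNbhd hne h₁.adj h₂.adj hyu₁ hyu₂ ▸ Or.inl rfl)

theorem ne_of_isSwap_of_ne (hG : G.IsAcyclic) {D E E' : {X : Finset V // isMinDomSet G X}}
    (hne : E ≠ E') (hs : IsSwap G D.1 u v) (hE : E.1 = D.1 \ {u} ∪ {v})
    (hs' : IsSwap G D.1 u' v') (hE' : E'.1 = D.1 \ {u'} ∪ {v'}) : v ≠ v' := by
  rintro rfl
  exact hne (Subtype.ext (by rw [hE, hE', hG.isSwap_left_unique D.2 hs hs']))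

theorem exists_isSharedPrivN_of_leaf (hG : G.IsAcyclic)
    {D E : {X : Finset V // isMinDomSet G X}} (hs : IsSwap G D.1 u v)
    (hE : E.1 = D.1 \ {u} ∪ {v}) (hleaf : (gammaGraph G).neighborSet E ⊆ {D})
    (hs' : IsSwap G D.1 u' v') (hu : u ≠ u') (hv : v ≠ v') :
    ∃ w, IsSharedPrivN G D.1 u u' w ∧ w ∉ closedNbhd G v ∧ w ∉ closedNbhd G v' := by
  have hvu' : v ≠ u' := fun h => hs.notMem (h ▸ hs'.mem)
  have hnotdom : ¬isDomSet G (E.1 \ {u'} ∪ {v'}) := by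
    intro hdom
    have hs'E : IsSwap G E.1 u' v' :=
      ⟨by simp [hE, hs'.mem, Ne.symm hu], by simp [hE, hs'.notMem, Ne.symm hv], hs'.adj, hdom⟩
    have hX := hleaf (gammaGraph_adj_iff.2 ⟨u', v', hs'E, rfl⟩ : ⟨_, hs'E.isMinDomSet E.2⟩ ∈ _)
    have hvX : v ∈ E.1 \ {u'} ∪ {v'} := by simp [hE, hvu']
    rw [Set.mem_singleton_iff] at hX
    exact hs.notMem (congrArg Subtype.val hX ▸ hvX)
  simp only [isDomSet, not_forall, not_exists, not_and] at hnotdom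
  obtain ⟨y, hy⟩ := hnotdom
  have hyv' : y ∉ closedNbhd G v' := hy v' (by simp)
  have hyv : y ∉ closedNbhd G v := hy v (by simp [hE, hvu'])
  have hyD : ∀ z ∈ D.1, z ≠ u → z ≠ u' → y ∉ closedNbhd G z :=
    fun z hz hzu hzu' => hy z (by simp [hE, hz, hzu, hzu'])
  have hyu_or : y ∈ closedNbhd G u ∨ y ∈ closedNbhd G u' := by
    obtain ⟨d, hd, hyd⟩ := D.2.1 y
    by_cases hdu : d = u
    · exact Or.inl (hdu ▸ hyd)
    by_cases hdu' : d = u'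
    · exact Or.inr (hdu' ▸ hyd)
    exact absurd hyd (hyD d hd hdu hdu')
  have hyu' : y ∈ closedNbhd G u' := by
    refine by_contra fun hyu' => hyv (hs.privN_subset_closedNbhd hG
      ⟨hyu_or.resolve_right hyu', fun z hz hzu => ?_⟩)
    by_cases hzu' : z = u'
    exacts [hzu' ▸ hyu', hyD z hz hzu hzu']
  have hyu : y ∈ closedNbhd G u := by
    refine by_contra fun hyu => hyv' (hs'.privN_subset_closedNbhd hG
      ⟨hyu', fun z hz hzu' => ?_⟩)
    by_cases hzu : z = u
    exacts [hzu ▸ hyu, hyD z hz hzu hzu']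
  refine ⟨y, ⟨hyu.resolve_left ?_, hyu'.resolve_left ?_, hyD⟩, hyv, hyv'⟩
  · rintro rfl
    exact hyv (Or.inr hs.adj.symm)
  · rintro rfl
    exact hyv' (Or.inr hs'.adj.symm)

theorem false_of_isSharedPrivN_of_privN_subset (hG : G.IsAcyclic) (hD : isDomSet G D)
    {v₁ v₂ : V} (hu : u ∈ D) (hpriv : privN G D u ⊆ {u})
    (hswap : ∀ x, IsSwap G D u x → x = v₁ ∨ x = v₂) (hne : u ≠ u')
    (hw : IsSharedPrivN G D u u' w) (hw' : IsSharedPrivN G D u u' w')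
    (hwv₁ : w ∉ closedNbhd G v₁) (hw'v₂ : w' ∉ closedNbhd G v₂) : False := by
  obtain rfl : w = w' :=
    hG.eq_of_adj_of_adj hne hw.adj_left hw.adj_right.symm hw'.adj_left hw'.adj_right.symm
  have hs : IsSwap G D u w :=
    ⟨hu, hw.notMem, hw.adj_left, hD.swap_of_privN_subset hw.adj_left (hpriv.trans (by simp))⟩
  rcases hswap w hs with rfl | rfl
  exacts [hwv₁ (Or.inl rfl), hw'v₂ (Or.inl rfl)]

theorem privN_eq_singleton_of_swaps (hG : G.IsAcyclic) (hD : isMinDomSet G D)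
    {u₁ u₂ u₃ v₁ v₂ v₃ : V} (hs₁ : IsSwap G D u₁ v₁) (hs₂ : IsSwap G D u₂ v₂)
    (hs₃ : IsSwap G D u₃ v₃) (hv₁₂ : v₁ ≠ v₂) (hv₁₃ : v₁ ≠ v₃) (hv₂₃ : v₂ ≠ v₃)
    (hswap : ∀ x y, IsSwap G D x y → (x = u₁ ∧ y = v₁) ∨ (x = u₂ ∧ y = v₂) ∨ (x = u₃ ∧ y = v₃))
    (link₁₂ : u₁ ≠ u₂ →
      ∃ w, IsSharedPrivN G D u₁ u₂ w ∧ w ∉ closedNbhd G v₁ ∧ w ∉ closedNbhd G v₂)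
    (link₁₃ : u₁ ≠ u₃ →
      ∃ w, IsSharedPrivN G D u₁ u₃ w ∧ w ∉ closedNbhd G v₁ ∧ w ∉ closedNbhd G v₃)
    (link₂₃ : u₂ ≠ u₃ →
      ∃ w, IsSharedPrivN G D u₂ u₃ w ∧ w ∉ closedNbhd G v₂ ∧ w ∉ closedNbhd G v₃) :
    privN G D u₃ = {u₃} := by
  have hpriv : ∀ {u v v'}, IsSwap G D u v → IsSwap G D u v' → v ≠ v' → privN G D u ⊆ {u} :=
    fun hs hs' => Set.subset_singleton_of_subset_pair (hs.privN_subset hG) (hs'.privN_subset hG)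
  rcases eq_or_ne u₁ u₃ with rfl | h₁₃ <;> rcases eq_or_ne u₂ u₁ with rfl | h₂₁
  · exact (hD.privN_nonempty hs₁.mem).subset_singleton_iff.1 (hpriv hs₁ hs₂ hv₁₂)
  · exfalso
    obtain ⟨w, hw, hwv₁, -⟩ := link₁₂ h₂₁.symm
    obtain ⟨w', hw', -, hw'v₃⟩ := link₂₃ h₂₁
    refine hG.false_of_isSharedPrivN_of_privN_subset hD.1 hs₁.mem (hpriv hs₁ hs₃ hv₁₃)
      (fun x hx => ?_) h₂₁.symm hw hw'.symm hwv₁ hw'v₃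
    rcases hswap _ _ hx with ⟨-, h⟩ | ⟨h, -⟩ | ⟨-, h⟩
    exacts [.inl h, absurd h.symm h₂₁, .inr h]
  · exfalso
    obtain ⟨w, hw, hwv₁, -⟩ := link₁₃ h₁₃
    obtain ⟨w', hw', hw'v₂, -⟩ := link₂₃ h₁₃
    refine hG.false_of_isSharedPrivN_of_privN_subset hD.1 hs₂.mem (hpriv hs₁ hs₂ hv₁₂)
      (fun x hx => ?_) h₁₃ hw hw' hwv₁ hw'v₂
    rcases hswap _ _ hx with ⟨-, h⟩ | ⟨-, h⟩ | ⟨h, -⟩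
    exacts [.inl h, .inr h, absurd h h₁₃]
  · exfalso
    obtain ⟨w₁₂, hw₁₂, -, hw₁₂v₂⟩ := link₁₂ h₂₁.symm
    obtain ⟨w₁₃, hw₁₃, -, hw₁₃v₃⟩ := link₁₃ h₁₃
    rcases eq_or_ne u₂ u₃ with rfl | h₂₃
    · refine hG.false_of_isSharedPrivN_of_privN_subset hD.1 hs₂.mem (hpriv hs₂ hs₃ hv₂₃)
        (fun x hx => ?_) h₂₁ hw₁₂.symm hw₁₃.symm hw₁₂v₂ hw₁₃v₃
      rcases hswap _ _ hx with ⟨h, -⟩ | ⟨-, h⟩ | ⟨-, h⟩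
      exacts [absurd h h₂₁, .inl h, .inr h]
    · obtain ⟨w₂₃, hw₂₃, -⟩ := link₂₃ h₂₃
      exact hG.false_of_pairwise_isSharedPrivN hs₁.mem hs₃.mem h₂₁.symm h₁₃ h₂₃ hw₁₂ hw₁₃ hw₂₃

theorem privN_eq_singleton_of_two_leaves (hG : G.IsAcyclic)
    {D E₁ E₂ E₃ : {X : Finset V // isMinDomSet G X}}
    (hD : (gammaGraph G).neighborSet D = {E₁, E₂, E₃}) (h₁₂ : E₁ ≠ E₂) (h₁₃ : E₁ ≠ E₃)
    (h₂₃ : E₂ ≠ E₃) (hE₁ : (gammaGraph G).neighborSet E₁ ⊆ {D})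
    (hE₂ : (gammaGraph G).neighborSet E₂ ⊆ {D}) {u₃ v₃ : V} (hs₃ : IsSwap G D.1 u₃ v₃)
    (hE₃ : E₃.1 = D.1 \ {u₃} ∪ {v₃}) : privN G D.1 u₃ = {u₃} := by
  obtain ⟨u₁, v₁, hs₁, hE₁'⟩ :=
    gammaGraph_adj_iff.1 (show E₁ ∈ (gammaGraph G).neighborSet D by simp [hD])
  obtain ⟨u₂, v₂, hs₂, hE₂'⟩ :=
    gammaGraph_adj_iff.1 (show E₂ ∈ (gammaGraph G).neighborSet D by simp [hD])
  have hv₁₂ := hG.ne_of_isSwap_of_ne h₁₂ hs₁ hE₁' hs₂ hE₂'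
  have hv₁₃ := hG.ne_of_isSwap_of_ne h₁₃ hs₁ hE₁' hs₃ hE₃
  have hv₂₃ := hG.ne_of_isSwap_of_ne h₂₃ hs₂ hE₂' hs₃ hE₃
  refine hG.privN_eq_singleton_of_swaps D.2 hs₁ hs₂ hs₃ hv₁₂ hv₁₃ hv₂₃ (fun x y hs => ?_)
    (hG.exists_isSharedPrivN_of_leaf hs₁ hE₁' hE₁ hs₂ · hv₁₂)
    (hG.exists_isSharedPrivN_of_leaf hs₁ hE₁' hE₁ hs₃ · hv₁₃)
    (hG.exists_isSharedPrivN_of_leaf hs₂ hE₂' hE₂ hs₃ · hv₂₃)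
  have hX := (gammaGraph_adj_iff (E := ⟨_, hs.isMinDomSet D.2⟩)).2 ⟨x, y, hs, rfl⟩
  rw [← mem_neighborSet, hD] at hX
  rcases hX with h | h | h
  · exact .inl (sdiff_singleton_union_singleton_inj hs₁.mem hs₁.notMem (by rw [← hE₁', ← h]))
  · exact .inr (.inl (sdiff_singleton_union_singleton_inj hs₂.mem hs₂.notMem
      (by rw [← hE₂', ← h])))
  · exact .inr (.inr (sdiff_singleton_union_singleton_inj hs₃.mem hs₃.notMem
      (by rw [← hE₃, ← h])))

end SimpleGraph.IsAcyclic

theorem Hgraph_adj_one_four : Hgraph.Adj 1 4 := by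
  simp [Hgraph]

theorem Hgraph_neighborSet_zero : Hgraph.neighborSet 0 = {1} := by
  ext x; fin_cases x <;> simp [Hgraph]

theorem Hgraph_neighborSet_one : Hgraph.neighborSet 1 = {0, 2, 4} := by
  ext x; fin_cases x <;> simp [Hgraph]

theorem Hgraph_neighborSet_two : Hgraph.neighborSet 2 = {1} := by
  ext x; fin_cases x <;> simp [Hgraph]

theorem Hgraph_neighborSet_three : Hgraph.neighborSet 3 = {4} := by
  ext x; fin_cases x <;> simp [Hgraph]

theorem Hgraph_neighborSet_four : Hgraph.neighborSet 4 = {3, 5, 1} := by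
  ext x; fin_cases x <;> simp [Hgraph]

theorem Hgraph_neighborSet_five : Hgraph.neighborSet 5 = {4} := by
  ext x; fin_cases x <;> simp [Hgraph]

theorem stmt12 :
    ∀ (V : Type) [Fintype V] [DecidableEq V] (T : SimpleGraph V),
      T.IsTree → IsEmpty ((gammaGraph T) ≃g Hgraph) := by
  intro V _ _ T hT
  refine ⟨fun φ => ?_⟩
  have hnbr : ∀ i, (gammaGraph T).neighborSet (φ.symm i) = φ.symm '' Hgraph.neighborSet i :=
    fun _ => φ.symm.image_neighborSet.symm
  have hne : ∀ {i j : Fin 6}, i ≠ j → φ.symm i ≠ φ.symm j := φ.symm.injective.ne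
  obtain ⟨c, c', hs, hQ⟩ := gammaGraph_adj_iff.1 (φ.symm.map_adj_iff.2 Hgraph_adj_one_four)
  have hP : privN T (φ.symm 1).1 c = {c} :=
    hT.isAcyclic.privN_eq_singleton_of_two_leaves (E₁ := φ.symm 0) (E₂ := φ.symm 2)
      (by simp [hnbr, Hgraph_neighborSet_one, Set.image_insert_eq])
      (hne (by decide)) (hne (by decide)) (hne (by decide))
      (by simp [hnbr, Hgraph_neighborSet_zero]) (by simp [hnbr, Hgraph_neighborSet_two]) hs hQ
  have hQ' : privN T (φ.symm 4).1 c' = {c'} :=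
    hT.isAcyclic.privN_eq_singleton_of_two_leaves
      (E₁ := φ.symm 3) (E₂ := φ.symm 5) (E₃ := φ.symm 1)
      (by simp [hnbr, Hgraph_neighborSet_four, Set.image_insert_eq])
      (hne (by decide)) (hne (by decide)) (hne (by decide))
      (by simp [hnbr, Hgraph_neighborSet_three]) (by simp [hnbr, Hgraph_neighborSet_five])
      (hQ ▸ hs.symm (φ.symm 1).2.1)
      (by rw [hQ, sdiff_singleton_union_singleton_swap hs.mem hs.notMem])
  exact hs.false_of_privN_eq_singleton hP (hQ ▸ hQ')
end

section
/- For each n ≥ 1, let Y_n be the tree obtained from n disjoint copies of the star K_{1,3} by joining one leaf of each copy to a single new common vertex. Then the γ-graph of Y_n is isomorphic to the star K_{1,n}. Moreover, in each γ-set of Y_n corresponding to a leaf of K_{1,n}, every vertex of the γ-set has an external private neighbour. -/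
open SimpleGraph Finset

/-- The star `K_{1,n}`, centre `none`. -/
def starGraph (n : ℕ) : SimpleGraph (Option (Fin n)) :=
  SimpleGraph.fromRel (fun u _ => u = none)

/-- `Y n`: `n` copies of `K_{1,3}` (centre `(i,0)`, leaves `(i,1), (i,2), (i,3)`),
with the leaf `(i,3)` of each copy joined to a common vertex `none`. -/
def Ygraph (n : ℕ) : SimpleGraph (Option (Fin n × Fin 4)) :=
  SimpleGraph.fromRel (fun u v =>
    match u, v with
    | some (i, a), some (j, b) => i = j ∧ a = 0 ∧ b ≠ 0
    | some (_, a), none => a = 3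
    | _, _ => False)

/-!
The root `none` and the leaves `(i, 1)` have pairwise disjoint closed neighbourhoods, so they need
`n + 1` distinct dominators; the centres `(i, 0)` together with any vertex dominating the root
attain this bound. A γ-set missing a centre `(i, 0)` would have to contain `(i, 2)` on top of those
`n + 1` dominators, so the γ-sets are exactly the centres plus either the root or one leaf `(i, 3)`.
Two of them differ by a single swap, which is along an edge exactly when one of the swapped vertices
is the root: the γ-graph is a star centred at the γ-set containing the root. In any other γ-set,
`(i, 3)` privately dominates the root and each centre `(j, 0)` privately dominates `(j, 1)`.
-/

theorem mem_closedNbhd_comm {V : Type} {G : SimpleGraph V} {x y : V} :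
    y ∈ closedNbhd G x ↔ x ∈ closedNbhd G y := by
  simp only [closedNbhd, Set.mem_ofPred_eq, eq_comm, G.adj_comm]

theorem card_le_card_sdiff_of_isDomSet {V ι : Type} [Fintype V] [DecidableEq V] [Fintype ι]
    {G : SimpleGraph V} {D : Finset V} (hD : isDomSet G D) {p : ι → V}
    (hp : Pairwise fun i j => Disjoint (closedNbhd G (p i)) (closedNbhd G (p j)))
    {E : Finset V} (hE : ∀ e ∈ E, ∀ i, p i ∉ closedNbhd G e) :
    Fintype.card ι ≤ #(D \ E) := by
  choose f hfD hf using fun i => hD (p i)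
  have hf' : ∀ i, f i ∈ closedNbhd G (p i) := fun i => mem_closedNbhd_comm.mp (hf i)
  have hinj : Function.Injective f := by
    intro i j hij
    by_contra hne
    exact Set.disjoint_left.mp (hp hne) (hf' i) (hij ▸ hf' j)
  rw [← card_univ]
  exact card_le_card_of_injOn f
    (fun i _ => mem_sdiff.mpr ⟨hfD i, fun hfE => hE _ hfE i (hf i)⟩) hinj.injOn

theorem Finset.insert_sdiff_union_eq_insert_iff {α : Type} [DecidableEq α] {C : Finset α}
    {a b u v : α} (ha : a ∉ C) (hb : b ∉ C) (hab : a ≠ b) :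
    (insert a C \ {u}) ∪ {v} = insert b C ↔ u = a ∧ v = b := by
  constructor
  · intro h
    have hbv : v = b := by
      have : b ∈ (insert a C \ {u}) ∪ {v} := h ▸ mem_insert_self b C
      simp only [mem_union, mem_sdiff, mem_insert, mem_singleton] at this
      rcases this with ⟨rfl | hbC, -⟩ | rfl
      exacts [absurd rfl hab, absurd hbC hb, rfl]
    refine ⟨?_, hbv⟩
    by_contra hua
    have : a ∈ insert b C := h ▸ mem_union_left _ (by simp [Ne.symm hua])
    simp only [mem_insert] at this
    exact this.elim hab (absurd · ha)
  · rintro ⟨rfl, rfl⟩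
    rw [sdiff_singleton_eq_erase, erase_insert ha, union_singleton]

namespace Ygraph

variable {n : ℕ}

@[simp]
theorem adj_some_some {i j : Fin n} {a b : Fin 4} :
    (Ygraph n).Adj (some (i, a)) (some (j, b)) ↔ i = j ∧ (a = 0 ∧ b ≠ 0 ∨ b = 0 ∧ a ≠ 0) := by
  simp only [Ygraph, fromRel_adj]
  grind

@[simp]
theorem adj_some_none {i : Fin n} {a : Fin 4} : (Ygraph n).Adj (some (i, a)) none ↔ a = 3 := by
  simp [Ygraph, fromRel_adj]

@[simp]
theorem adj_none_some {i : Fin n} {a : Fin 4} : (Ygraph n).Adj none (some (i, a)) ↔ a = 3 := by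
  rw [adj_comm, adj_some_none]

def hub : Option (Fin n) → Option (Fin n × Fin 4) := Option.map (·, 3)

def centres (n : ℕ) : Finset (Option (Fin n × Fin 4)) := univ.image fun i => some (i, 0)

def gammaSet (o : Option (Fin n)) : Finset (Option (Fin n × Fin 4)) := insert (hub o) (centres n)

theorem hub_injective : Function.Injective (hub (n := n)) :=
  Option.map_injective fun _ _ h => (Prod.ext_iff.mp h).1

@[simp]
theorem mem_centres {x : Option (Fin n × Fin 4)} : x ∈ centres n ↔ ∃ i, x = some (i, 0) := by
  simp [centres, eq_comm]

theorem hub_notMem_centres (o : Option (Fin n)) : hub o ∉ centres n := by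
  cases o <;> simp [hub]

theorem card_gammaSet (o : Option (Fin n)) : #(gammaSet o) = n + 1 := by
  rw [gammaSet, card_insert_of_notMem (hub_notMem_centres o), centres,
    card_image_of_injective _ fun _ _ h => by simpa using h, card_univ, Fintype.card_fin]

theorem gammaSet_injective : Function.Injective (gammaSet (n := n)) := by
  intro o o' h
  by_contra hne
  have : hub o ∈ gammaSet o' := by rw [← h]; exact mem_insert_self _ _
  rcases mem_insert.mp this with h' | h'
  exacts [hne (hub_injective h'), hub_notMem_centres o h']

theorem mem_closedNbhd_centre (i : Fin n) (a : Fin 4) :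
    some (i, a) ∈ closedNbhd (Ygraph n) (some (i, 0)) := by
  by_cases ha : a = 0
  · exact Or.inl (by rw [ha])
  · exact Or.inr (by simp [ha])

theorem mem_closedNbhd_none_iff {x : Option (Fin n × Fin 4)} :
    none ∈ closedNbhd (Ygraph n) x ↔ ∃ o, x = hub o := by
  rcases x with _ | ⟨j, b⟩
  · exact ⟨fun _ => ⟨none, rfl⟩, fun _ => Or.inl rfl⟩
  · simp [closedNbhd, hub, eq_comm]

theorem mem_closedNbhd_leaf_iff {i : Fin n} {a : Fin 4} (ha0 : a ≠ 0) (ha3 : a ≠ 3)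
    {x : Option (Fin n × Fin 4)} :
    some (i, a) ∈ closedNbhd (Ygraph n) x ↔ x = some (i, 0) ∨ x = some (i, a) := by
  rcases x with _ | ⟨j, b⟩
  · simp [closedNbhd, ha3]
  · simp only [closedNbhd, Set.mem_ofPred_eq, adj_some_some, Option.some.injEq, Prod.mk.injEq]
    grind

theorem isDomSet_gammaSet (o : Option (Fin n)) : isDomSet (Ygraph n) (gammaSet o) := by
  rintro (_ | ⟨i, a⟩)
  · exact ⟨hub o, mem_insert_self _ _, mem_closedNbhd_none_iff.mpr ⟨o, rfl⟩⟩
  · exact ⟨some (i, 0), mem_insert_of_mem (mem_centres.mpr ⟨i, rfl⟩), mem_closedNbhd_centre i a⟩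

def packing : Option (Fin n) → Option (Fin n × Fin 4) := Option.map (·, 1)

theorem pairwise_disjoint_closedNbhd_packing :
    Pairwise fun o o' =>
      Disjoint (closedNbhd (Ygraph n) (packing o)) (closedNbhd (Ygraph n) (packing o')) := by
  have hleaf : ∀ {i : Fin n} {x}, some (i, 1) ∈ closedNbhd (Ygraph n) x ↔
      x = some (i, 0) ∨ x = some (i, 1) :=
    mem_closedNbhd_leaf_iff (by decide) (by decide)
  intro o o' hne
  refine Set.disjoint_left.mpr fun x hx hx' => ?_
  rw [mem_closedNbhd_comm] at hx hx'
  rcases o with _ | i <;> rcases o' with _ | j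
  · exact hne rfl
  · obtain ⟨o, rfl⟩ := mem_closedNbhd_none_iff.mp hx
    rcases hleaf.mp hx' with h | h <;> cases o <;> simp [hub] at h
  · obtain ⟨o, rfl⟩ := mem_closedNbhd_none_iff.mp hx'
    rcases hleaf.mp hx with h | h <;> cases o <;> simp [hub] at h
  · rcases hleaf.mp hx with rfl | rfl <;> rcases hleaf.mp hx' with h | h <;>
      simp_all [packing]

theorem le_card_of_isDomSet {D : Finset (Option (Fin n × Fin 4))} (hD : isDomSet (Ygraph n) D) :
    n + 1 ≤ #D := by
  simpa using card_le_card_sdiff_of_isDomSet hD pairwise_disjoint_closedNbhd_packing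
    (E := ∅) (by simp)

theorem isMinDomSet_gammaSet (o : Option (Fin n)) : isMinDomSet (Ygraph n) (gammaSet o) :=
  ⟨isDomSet_gammaSet o, fun _ hD => card_gammaSet o ▸ le_card_of_isDomSet hD⟩

theorem card_eq_of_isMinDomSet {D : Finset (Option (Fin n × Fin 4))}
    (hD : isMinDomSet (Ygraph n) D) : #D = n + 1 :=
  le_antisymm (card_gammaSet none ▸ hD.2 _ (isDomSet_gammaSet none)) (le_card_of_isDomSet hD.1)

/-- A γ-set missing the centre `(i, 0)` must contain `(i, 2)`, which dominates no vertex of the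
packing, so it would exceed the packing bound. -/
theorem centres_subset_of_isMinDomSet {D : Finset (Option (Fin n × Fin 4))}
    (hD : isMinDomSet (Ygraph n) D) : centres n ⊆ D := by
  intro x hx
  obtain ⟨i, rfl⟩ := mem_centres.mp hx
  by_contra hi
  have h2 : some (i, 2) ∈ D := by
    obtain ⟨d, hd, hdom⟩ := hD.1 (some (i, 2))
    rcases (mem_closedNbhd_leaf_iff (by decide) (by decide)).mp hdom with rfl | rfl
    exacts [absurd hd hi, hd]
  have hpacking : ∀ o, packing o ∉ closedNbhd (Ygraph n) (some (i, 2)) := by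
    intro o ho
    rw [mem_closedNbhd_comm, mem_closedNbhd_leaf_iff (by decide) (by decide)] at ho
    cases o <;> simp [packing] at ho
  have := card_le_card_sdiff_of_isDomSet hD.1 pairwise_disjoint_closedNbhd_packing
    (E := {some (i, 2)}) (by simpa using hpacking)
  rw [card_sdiff_of_subset (singleton_subset_iff.mpr h2), card_eq_of_isMinDomSet hD] at this
  simp at this

theorem exists_eq_gammaSet {D : Finset (Option (Fin n × Fin 4))}
    (hD : isMinDomSet (Ygraph n) D) : ∃ o, D = gammaSet o := by
  obtain ⟨d, hd, hdom⟩ := hD.1 none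
  obtain ⟨o, rfl⟩ := mem_closedNbhd_none_iff.mp hdom
  refine ⟨o, (eq_of_subset_of_card_le ?_ ?_).symm⟩
  · exact insert_subset hd (centres_subset_of_isMinDomSet hD)
  · rw [card_eq_of_isMinDomSet hD, card_gammaSet]

theorem adj_hub_iff {o o' : Option (Fin n)} :
    (Ygraph n).Adj (hub o) (hub o') ↔ (_root_.starGraph n).Adj o o' := by
  rcases o with _ | i <;> rcases o' with _ | j <;> simp [hub, _root_.starGraph, fromRel_adj]

theorem gammaGraph_adj_iff {o o' : Option (Fin n)} :
    (gammaGraph (Ygraph n)).Adj ⟨gammaSet o, isMinDomSet_gammaSet o⟩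
      ⟨gammaSet o', isMinDomSet_gammaSet o'⟩ ↔ (_root_.starGraph n).Adj o o' := by
  simp only [gammaGraph, ne_eq, Subtype.mk.injEq, gammaSet_injective.eq_iff]
  by_cases h : o = o'
  · subst h
    simp
  have hswap : ∀ {o o' : Option (Fin n)} {u v}, o ≠ o' →
      (gammaSet o' = (gammaSet o \ {u}) ∪ {v} ↔ u = hub o ∧ v = hub o') := fun hne => by
    rw [eq_comm]
    exact Finset.insert_sdiff_union_eq_insert_iff (hub_notMem_centres _) (hub_notMem_centres _)
      (hub_injective.ne hne)
  simp only [h, not_false_eq_true, true_and, hswap h, hswap (Ne.symm h)]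
  constructor
  · rintro ⟨u, v, huv, ⟨rfl, rfl⟩ | ⟨rfl, rfl⟩⟩
    exacts [adj_hub_iff.mp huv, (adj_hub_iff.mp huv).symm]
  · exact fun h => ⟨_, _, adj_hub_iff.mpr h, Or.inl ⟨rfl, rfl⟩⟩

noncomputable def starGraphIsoGammaGraph (n : ℕ) : _root_.starGraph n ≃g gammaGraph (Ygraph n) where
  toEquiv := Equiv.ofBijective (fun o => ⟨gammaSet o, isMinDomSet_gammaSet o⟩)
    ⟨fun _ _ h => gammaSet_injective (congrArg Subtype.val h),
      fun D => (exists_eq_gammaSet D.2).imp fun _ h => Subtype.ext h.symm⟩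
  map_rel_iff' := gammaGraph_adj_iff

theorem centre_mem_privN (o : Option (Fin n)) (i : Fin n) :
    some (i, 1) ∈ privN (Ygraph n) (gammaSet o) (some (i, 0)) := by
  refine ⟨mem_closedNbhd_centre i 1, fun z hz hzi hmem => ?_⟩
  rcases (mem_closedNbhd_leaf_iff (by decide) (by decide)).mp hmem with rfl | rfl
  · exact hzi rfl
  · rcases mem_insert.mp hz with h | h
    · cases o <;> simp [hub] at h
    · simp at h

theorem none_mem_privN_hub (i : Fin n) :
    none ∈ privN (Ygraph n) (gammaSet (some i)) (hub (some i)) := by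
  refine ⟨mem_closedNbhd_none_iff.mpr ⟨_, rfl⟩, fun z hz hzi hmem => ?_⟩
  obtain ⟨o, rfl⟩ := mem_closedNbhd_none_iff.mp hmem
  rcases mem_insert.mp hz with h | h
  · exact hzi h
  · exact hub_notMem_centres o h

end Ygraph

theorem stmt15_general (n : ℕ) :
    ∃ e : (gammaGraph (Ygraph n)) ≃g _root_.starGraph n,
      ∀ D : {D : Finset (Option (Fin n × Fin 4)) // isMinDomSet (Ygraph n) D},
        e D ≠ none →
          ∀ x ∈ D.1, (privN (Ygraph n) D.1 x \ {x}).Nonempty := by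
  refine ⟨(Ygraph.starGraphIsoGammaGraph n).symm, fun D hD x hx => ?_⟩
  obtain ⟨i, hi⟩ := Option.ne_none_iff_exists'.mp hD
  have hDi : D.1 = Ygraph.gammaSet (some i) := by
    rw [← (Ygraph.starGraphIsoGammaGraph n).apply_symm_apply D, hi]; rfl
  rw [hDi] at hx ⊢
  rcases mem_insert.mp hx with rfl | hx
  · exact ⟨none, Ygraph.none_mem_privN_hub i, by simp [Ygraph.hub]⟩
  · obtain ⟨j, rfl⟩ := Ygraph.mem_centres.mp hx
    exact ⟨some (j, 1), Ygraph.centre_mem_privN _ j, by simp⟩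

theorem stmt15 (n : ℕ) (hn : 1 ≤ n) :
    ∃ e : (gammaGraph (Ygraph n)) ≃g _root_.starGraph n,
      ∀ D : {D : Finset (Option (Fin n × Fin 4)) // isMinDomSet (Ygraph n) D},
        e D ≠ none →
          ∀ x ∈ D.1, (privN (Ygraph n) D.1 x \ {x}).Nonempty :=
  stmt15_general n
end
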